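/- arXiv:0811.1152 — 2 statements merged into one kernel-verified Lean document; each statement's English description precedes it below -/
import Mathlib

section
/- Let d ≥ 1 and N ∈ ℕ. There exist real constants C_{αβγ}, indexed by multi-indices α, β, γ ∈ ℕ^d with |β|+|γ| ≤ N and |α|+|β|+|γ| ≤ 2N, such that the following holds: for every smooth function a : ℝ^d → ℝ all of whose derivatives have at most polynomial growth, if one defines A₀u = a·u and A_M u = P²(A_{M−1}u) − A_{M−1}(P²u) for Schwartz functions u (where P²u = −Δu + |x|²u), then for every Schwartz function u, A_N u = Σ_{|β|+|γ|≤N, |α|+|β|+|γ|≤2N} C_{αβγ} (∂^α a)·x^β ∂^γ u. -/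
open MeasureTheory

/-- Partial derivative in direction `i`. -/
noncomputable def pd (d : ℕ) (i : Fin d) (u : (Fin d → ℝ) → ℝ) : (Fin d → ℝ) → ℝ :=
  fun x => fderiv ℝ u x (Pi.single i 1)

/-- Iterated partial derivative `∂^β`. -/
noncomputable def pdM (d : ℕ) (β : Fin d → ℕ) (u : (Fin d → ℝ) → ℝ) : (Fin d → ℝ) → ℝ :=
  (List.finRange d).foldr (fun i w => (pd d i)^[β i] w) u

/-- The harmonic oscillator `P²u = −Δu + |x|²u`, acting on functions. -/
noncomputable def PsqFun (d : ℕ) (u : (Fin d → ℝ) → ℝ) : (Fin d → ℝ) → ℝ :=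
  fun x => -(∑ i, pd d i (pd d i u) x) + (∑ i, (x i) ^ 2) * u x

/-- Iterated commutators `A₀u = a·u`, `A_M u = P²(A_{M-1}u) − A_{M-1}(P²u)`. -/
noncomputable def AseqFun (d : ℕ) (a : (Fin d → ℝ) → ℝ) :
    ℕ → ((Fin d → ℝ) → ℝ) → ((Fin d → ℝ) → ℝ)
  | 0 => fun u x => a x * u x
  | N + 1 => fun u x => PsqFun d (AseqFun d a N u) x - AseqFun d a N (PsqFun d u) x

/-!
Write `X_i` for multiplication by `x_i` and `D_i` for `∂_i`. On smooth functions
`[P², X_i] = -2 D_i` and `[P², D_i] = -2 X_i`, so for a word `W` in these letters `[P², W]` is a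
combination of words of the same length. Together with the Leibniz rule
`P²(f v) = f P²v - (Δf) v - 2 ∇f · ∇v`, this shows by induction on `N` that `A_N u` is a
combination of the terms `(∂^α a) (W u)` with `|W| ≤ N` and `|α| + |W| ≤ 2N`, with coefficients that
do not depend on `a` or `u`. Moving every `X_i` of a word to the left turns `W u` into a
combination of the `x^β ∂^γ u` with `|β| + |γ| ≤ |W|`, and `C_{αβγ}` is the total coefficient
of `(α, β, γ)`.
-/

open scoped ContDiff

section WeightedSum

variable {κ κ' : Type*}

/-- A formal linear combination `∑ c [k]` is a list of pairs `(c, k)`; this evaluates it. -/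
def weightedSum (L : List (ℝ × κ)) (V : κ → ℝ) : ℝ :=
  (L.map fun p => p.1 * V p.2).sum

def bindComb (L : List (ℝ × κ)) (M : κ → List (ℝ × κ')) : List (ℝ × κ') :=
  L.flatMap fun p => (M p.2).map fun q => (p.1 * q.1, q.2)

def combCoeff [DecidableEq κ] (L : List (ℝ × κ)) (k : κ) : ℝ :=
  weightedSum L fun k' => if k' = k then 1 else 0

@[simp] theorem weightedSum_nil (V : κ → ℝ) : weightedSum [] V = 0 := rfl

@[simp] theorem weightedSum_cons (p : ℝ × κ) (L : List (ℝ × κ)) (V : κ → ℝ) :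
    weightedSum (p :: L) V = p.1 * V p.2 + weightedSum L V := rfl

@[simp] theorem weightedSum_append (L L' : List (ℝ × κ)) (V : κ → ℝ) :
    weightedSum (L ++ L') V = weightedSum L V + weightedSum L' V := by
  simp [weightedSum]

theorem weightedSum_map_snd (L : List (ℝ × κ)) (f : κ → κ') (V : κ' → ℝ) :
    weightedSum (L.map fun p => (p.1, f p.2)) V = weightedSum L fun k => V (f k) := by
  simp [weightedSum, Function.comp_def]

theorem weightedSum_finRange {n : ℕ} (c : ℝ) (f : Fin n → κ) (V : κ → ℝ) :
    weightedSum ((List.finRange n).map fun i => (c, f i)) V = c * ∑ i, V (f i) := by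
  simp [weightedSum, Fin.sum_univ_def, ← List.sum_map_mul_left, Function.comp_def]

theorem mul_weightedSum (c : ℝ) (L : List (ℝ × κ)) (V : κ → ℝ) :
    c * weightedSum L V = weightedSum L fun k => c * V k := by
  induction L with
  | nil => simp
  | cons p L ih => simp only [weightedSum_cons, mul_add, ih]; ring

theorem weightedSum_sub (L : List (ℝ × κ)) (V W : κ → ℝ) :
    weightedSum L V - weightedSum L W = weightedSum L fun k => V k - W k := by
  induction L with
  | nil => simp
  | cons p L ih => simp only [weightedSum_cons, ← ih]; ring

theorem weightedSum_bindComb (L : List (ℝ × κ)) (M : κ → List (ℝ × κ')) (V : κ' → ℝ) :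
    weightedSum (bindComb L M) V = weightedSum L fun k => weightedSum (M k) V := by
  induction L with
  | nil => rfl
  | cons p L ih =>
    simp only [bindComb, List.flatMap_cons, weightedSum_append, weightedSum_cons] at ih ⊢
    rw [ih, mul_weightedSum]
    simp [weightedSum, Function.comp_def, mul_assoc, mul_left_comm]

theorem weightedSum_eq_sum_combCoeff [DecidableEq κ] {L : List (ℝ × κ)} {s : Finset κ}
    (hs : ∀ p ∈ L, p.2 ∈ s) (V : κ → ℝ) :
    weightedSum L V = ∑ k ∈ s, combCoeff L k * V k := by
  induction L with
  | nil => simp [combCoeff]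
  | cons p L ih =>
    rw [weightedSum_cons, ih fun q hq => hs q (List.mem_cons_of_mem p hq)]
    simp [combCoeff, add_mul, Finset.sum_add_distrib, hs p List.mem_cons_self]

end WeightedSum

section HarmonicOscillator

variable {d : ℕ}

section PartialDerivatives

variable {u v : (Fin d → ℝ) → ℝ}

theorem ContDiff.pd (hu : ContDiff ℝ ∞ u) (i : Fin d) : ContDiff ℝ ∞ (pd d i u) :=
  (hu.fderiv_right le_rfl).clm_apply contDiff_const

theorem pd_const (c : ℝ) (i : Fin d) : pd d i (fun _ => c) = fun _ => 0 := by
  ext x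
  simp [pd]

theorem pd_add (hu : Differentiable ℝ u) (hv : Differentiable ℝ v) (i : Fin d) :
    pd d i (fun y => u y + v y) = fun x => pd d i u x + pd d i v x := by
  ext x
  simp [pd, fderiv_fun_add (hu x) (hv x)]

theorem pd_neg (i : Fin d) : pd d i (fun y => -u y) = fun x => -pd d i u x := by
  ext x
  simp [pd]

theorem pd_const_mul (hu : Differentiable ℝ u) (c : ℝ) (i : Fin d) :
    pd d i (fun y => c * u y) = fun x => c * pd d i u x := by
  ext x
  simp [pd, fderiv_const_mul (hu x)]

theorem pd_mul (hu : Differentiable ℝ u) (hv : Differentiable ℝ v) (i : Fin d) :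
    pd d i (fun y => u y * v y) = fun x => pd d i u x * v x + u x * pd d i v x := by
  ext x
  simp only [pd, fderiv_fun_mul (hu x) (hv x), add_apply,
    smul_apply, smul_eq_mul]
  ring

theorem pd_sum {ι : Type*} {s : Finset ι} {f : ι → (Fin d → ℝ) → ℝ}
    (hf : ∀ k ∈ s, Differentiable ℝ (f k)) (i : Fin d) :
    pd d i (fun y => ∑ k ∈ s, f k y) = fun x => ∑ k ∈ s, pd d i (f k) x := by
  ext x
  simp [pd, fderiv_fun_sum fun k hk => hf k hk x]

theorem pd_comm (hu : ContDiff ℝ ∞ u) (i j : Fin d) : pd d i (pd d j u) = pd d j (pd d i u) := by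
  ext x
  have hsymm : IsSymmSndFDerivAt ℝ u x :=
    hu.contDiffAt.isSymmSndFDerivAt
      (by rw [minSmoothness_of_isRCLikeNormedField]; exact WithTop.coe_le_coe.2 le_top)
  have hpd : ∀ v w : Fin d → ℝ,
      fderiv ℝ (fun y => fderiv ℝ u y v) x w = fderiv ℝ (fderiv ℝ u) x w v := by
    intro v w
    rw [fderiv_clm_apply ((hu.fderiv_right (m := ∞) le_rfl).differentiable (by simp) x)
      (differentiableAt_const v)]
    simp
  unfold pd
  rw [hpd, hsymm, ← hpd]

theorem pd_coord (i j : Fin d) : pd d i (fun y => y j) = fun _ => (Pi.single i 1 : Fin d → ℝ) j := by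
  ext x
  exact congrArg (· (Pi.single i 1)) ((ContinuousLinearMap.proj j : (Fin d → ℝ) →L[ℝ] ℝ).fderiv)

theorem pd_sumSq (j : Fin d) : pd d j (fun y => ∑ i, y i ^ 2) = fun x => 2 * x j := by
  have hcoord : ∀ i : Fin d, Differentiable ℝ fun y : Fin d → ℝ => y i :=
    fun i => differentiable_apply i
  simp_rw [sq]
  rw [pd_sum fun i _ => by fun_prop]
  simp_rw [pd_mul (hcoord _) (hcoord _), pd_coord]
  ext x
  simp only [Pi.single_apply, ite_mul, one_mul, zero_mul, mul_ite, mul_one, mul_zero,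
    Finset.sum_add_distrib, Finset.sum_ite_eq', Finset.mem_univ, if_true]
  ring

theorem pd_monomial (β : Fin d → ℕ) (i : Fin d) :
    pd d i (fun y => ∏ j, y j ^ β j)
      = fun x : Fin d → ℝ => β i * ∏ j, x j ^ (β - Pi.single i 1 : Fin d → ℕ) j := by
  ext x
  have hfactor : ∀ j, HasFDerivAt (fun y : Fin d → ℝ => y j ^ β j)
      ((β j * x j ^ (β j - 1) : ℝ) •
        ContinuousLinearMap.proj (R := ℝ) (φ := fun _ : Fin d => ℝ) j) x :=
    fun j => (hasDerivAt_pow (β j) (x j)).comp_hasFDerivAt x (hasFDerivAt_apply j x)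
  rw [pd, (HasFDerivAt.finsetProd fun j _ => hfactor j).fderiv]
  simp only [sum_apply, smul_apply,
    ContinuousLinearMap.proj_apply, Pi.single_apply, smul_eq_mul, mul_ite, mul_one, mul_zero,
    Finset.sum_ite_eq', Finset.mem_univ, if_true, Pi.sub_apply]
  have hrest : ∏ k ∈ Finset.univ.erase i, x k ^ (β k - if k = i then 1 else 0)
      = ∏ k ∈ Finset.univ.erase i, x k ^ β k :=
    Finset.prod_congr rfl fun k hk => by rw [if_neg (Finset.ne_of_mem_erase hk), Nat.sub_zero]
  rw [← Finset.mul_prod_erase Finset.univ _ (Finset.mem_univ i), if_pos rfl, hrest]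
  ring

end PartialDerivatives

section MultiIndices

variable {u : (Fin d → ℝ) → ℝ}

noncomputable def pdList (l : List (Fin d)) (u : (Fin d → ℝ) → ℝ) : (Fin d → ℝ) → ℝ :=
  l.foldr (pd d) u

theorem ContDiff.pdList (hu : ContDiff ℝ ∞ u) (l : List (Fin d)) :
    ContDiff ℝ ∞ (_root_.pdList l u) := by
  induction l with
  | nil => exact hu
  | cons i l ih => exact ih.pd i

theorem pdList_perm (hu : ContDiff ℝ ∞ u) {l l' : List (Fin d)} (h : l.Perm l') :
    pdList l u = pdList l' u := by
  induction h with
  | nil => rfl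
  | cons i _ ih => exact congrArg (pd d i) ih
  | swap i j l => exact pd_comm (hu.pdList l) j i
  | trans _ _ ih ih' => exact ih.trans ih'

def multiIndexList (β : Fin d → ℕ) : List (Fin d) :=
  (List.finRange d).flatMap fun i => List.replicate (β i) i

theorem count_multiIndexList (β : Fin d → ℕ) (j : Fin d) : (multiIndexList β).count j = β j := by
  simp only [multiIndexList, List.count_flatMap, ← Fin.sum_univ_def, Function.comp_def,
    List.count_replicate]
  simp

theorem pdM_eq_pdList (β : Fin d → ℕ) (u : (Fin d → ℝ) → ℝ) :
    pdM d β u = pdList (multiIndexList β) u := by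
  unfold pdM multiIndexList
  induction List.finRange d with
  | nil => rfl
  | cons i l ih =>
    have hrep : ∀ (n : ℕ) w, (pd d i)^[n] w = (List.replicate n i).foldr (pd d) w := by
      intro n w
      induction n with
      | zero => rfl
      | succ n ih => rw [Function.iterate_succ_apply', ih]; rfl
    simp [pdList, ih, hrep]

theorem ContDiff.pdM (hu : ContDiff ℝ ∞ u) (β : Fin d → ℕ) : ContDiff ℝ ∞ (_root_.pdM d β u) := by
  rw [pdM_eq_pdList]
  exact hu.pdList _

theorem pdM_zero (u : (Fin d → ℝ) → ℝ) : pdM d 0 u = u := by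
  simp [pdM]

theorem pd_pdM (hu : ContDiff ℝ ∞ u) (i : Fin d) (β : Fin d → ℕ) :
    pd d i (pdM d β u) = pdM d (β + Pi.single i 1) u := by
  rw [pdM_eq_pdList, pdM_eq_pdList]
  refine pdList_perm (l := i :: multiIndexList β) hu (List.perm_iff_count.2 fun j => ?_)
  rcases eq_or_ne i j with rfl | hij
  · simp [count_multiIndexList]
  · simp [count_multiIndexList, hij, hij.symm]

theorem sum_add_single (β : Fin d → ℕ) (i : Fin d) :
    ∑ j, (β + Pi.single i 1 : Fin d → ℕ) j = ∑ j, β j + 1 := by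
  simp [Finset.sum_add_distrib]

theorem sum_sub_single_le (β : Fin d → ℕ) (i : Fin d) :
    ∑ j, (β - Pi.single i 1 : Fin d → ℕ) j ≤ ∑ j, β j :=
  Finset.sum_le_sum fun _ _ => Nat.sub_le _ _

theorem prod_pow_add_single (x : Fin d → ℝ) (β : Fin d → ℕ) (i : Fin d) :
    ∏ j, x j ^ (β + Pi.single i 1 : Fin d → ℕ) j = x i * ∏ j, x j ^ β j := by
  simp only [Pi.add_apply, pow_add, Finset.prod_mul_distrib, Pi.single_apply, pow_ite, pow_one,
    pow_zero, Finset.prod_ite_eq', Finset.mem_univ, if_true]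
  ring

end MultiIndices

section Linearity

variable {u v : (Fin d → ℝ) → ℝ}

theorem contDiff_sumSq : ContDiff ℝ ∞ fun y : Fin d → ℝ => ∑ i, y i ^ 2 :=
  ContDiff.sum fun i _ => (contDiff_apply ℝ ℝ i).pow 2

theorem ContDiff.psqFun (hu : ContDiff ℝ ∞ u) : ContDiff ℝ ∞ (PsqFun d u) :=
  (ContDiff.sum fun i _ => (hu.pd i).pd i).neg.add (contDiff_sumSq.mul hu)

theorem psqFun_add (hu : ContDiff ℝ ∞ u) (hv : ContDiff ℝ ∞ v) :
    PsqFun d (fun y => u y + v y) = fun x => PsqFun d u x + PsqFun d v x := by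
  ext x
  simp only [PsqFun, pd_add (hu.differentiable (by simp)) (hv.differentiable (by simp)),
    pd_add ((hu.pd _).differentiable (by simp)) ((hv.pd _).differentiable (by simp)),
    Finset.sum_add_distrib]
  ring

theorem psqFun_const_mul (hu : ContDiff ℝ ∞ u) (c : ℝ) :
    PsqFun d (fun y => c * u y) = fun x => c * PsqFun d u x := by
  ext x
  simp only [PsqFun, pd_const_mul (hu.differentiable (by simp)),
    pd_const_mul ((hu.pd _).differentiable (by simp)), ← Finset.mul_sum]
  ring

theorem ContDiff.weightedSum {κ : Type*} {F : κ → (Fin d → ℝ) → ℝ}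
    (hF : ∀ k, ContDiff ℝ ∞ (F k)) (L : List (ℝ × κ)) :
    ContDiff ℝ ∞ fun y => weightedSum L fun k => F k y := by
  induction L with
  | nil => exact contDiff_const
  | cons p L ih => exact (contDiff_const.mul (hF p.2)).add ih

theorem psqFun_weightedSum {κ : Type*} {F : κ → (Fin d → ℝ) → ℝ}
    (hF : ∀ k, ContDiff ℝ ∞ (F k)) (L : List (ℝ × κ)) :
    PsqFun d (fun y => weightedSum L fun k => F k y)
      = fun x => weightedSum L fun k => PsqFun d (F k) x := by
  induction L with
  | nil => ext x; simp [PsqFun, pd_const]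
  | cons p L ih =>
    simp only [weightedSum_cons]
    rw [psqFun_add (contDiff_const.mul (hF p.2)) (ContDiff.weightedSum hF L),
      psqFun_const_mul (hF p.2), ih]

theorem psqFun_mul (hu : ContDiff ℝ ∞ u) (hv : ContDiff ℝ ∞ v) (x : Fin d → ℝ) :
    PsqFun d (fun y => u y * v y) x = u x * PsqFun d v x
      - (∑ i, pd d i (pd d i u) x) * v x - 2 * ∑ i, pd d i u x * pd d i v x := by
  have hdiff : ∀ {f : (Fin d → ℝ) → ℝ}, ContDiff ℝ ∞ f → Differentiable ℝ f :=
    fun hf => hf.differentiable (by simp)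
  simp only [PsqFun, pd_mul (hdiff hu) (hdiff hv),
    pd_add (hdiff ((hu.pd _).mul hv)) (hdiff (hu.mul (hv.pd _))),
    pd_mul (hdiff (hu.pd _)) (hdiff hv), pd_mul (hdiff hu) (hdiff (hv.pd _)),
    Finset.sum_add_distrib, ← Finset.sum_mul, ← Finset.mul_sum]
  ring

end Linearity

section Words

variable {u v : (Fin d → ℝ) → ℝ}

/-- `Sum.inl i` is the letter `X_i` (multiplication by `x_i`), `Sum.inr i` the letter `D_i`. -/
noncomputable def applyLetter : Fin d ⊕ Fin d → ((Fin d → ℝ) → ℝ) → (Fin d → ℝ) → ℝ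
  | .inl i, u => fun x => x i * u x
  | .inr i, u => pd d i u

noncomputable def applyWord (w : List (Fin d ⊕ Fin d)) (u : (Fin d → ℝ) → ℝ) :
    (Fin d → ℝ) → ℝ :=
  w.foldr applyLetter u

@[simp] theorem applyWord_cons (l : Fin d ⊕ Fin d) (w : List (Fin d ⊕ Fin d)) :
    applyWord (l :: w) u = applyLetter l (applyWord w u) := rfl

theorem ContDiff.applyLetter (hu : ContDiff ℝ ∞ u) :
    ∀ l : Fin d ⊕ Fin d, ContDiff ℝ ∞ (_root_.applyLetter l u)
  | .inl i => (contDiff_apply ℝ ℝ i).mul hu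
  | .inr i => hu.pd i

theorem ContDiff.applyWord (hu : ContDiff ℝ ∞ u) (w : List (Fin d ⊕ Fin d)) :
    ContDiff ℝ ∞ (_root_.applyWord w u) := by
  induction w with
  | nil => exact hu
  | cons l w ih => exact ih.applyLetter l

theorem applyLetter_add (hu : Differentiable ℝ u) (hv : Differentiable ℝ v) :
    ∀ l : Fin d ⊕ Fin d,
      applyLetter l (fun y => u y + v y) = fun x => applyLetter l u x + applyLetter l v x
  | .inl i => by ext x; simp only [applyLetter]; ring
  | .inr i => pd_add hu hv i

theorem applyLetter_const_mul (hu : Differentiable ℝ u) (c : ℝ) :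
    ∀ l : Fin d ⊕ Fin d, applyLetter l (fun y => c * u y) = fun x => c * applyLetter l u x
  | .inl i => by ext x; simp only [applyLetter]; ring
  | .inr i => pd_const_mul hu c i

theorem applyLetter_weightedSum {κ : Type*} {F : κ → (Fin d → ℝ) → ℝ}
    (hF : ∀ k, ContDiff ℝ ∞ (F k)) (l : Fin d ⊕ Fin d) (L : List (ℝ × κ)) :
    applyLetter l (fun y => weightedSum L fun k => F k y)
      = fun x => weightedSum L fun k => applyLetter l (F k) x := by
  induction L with
  | nil => cases l <;> simp [applyLetter, pd_const]
  | cons p L ih =>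
    simp only [weightedSum_cons]
    rw [applyLetter_add ((contDiff_const.mul (hF p.2)).differentiable (by simp))
        ((ContDiff.weightedSum hF L).differentiable (by simp)),
      applyLetter_const_mul ((hF p.2).differentiable (by simp)), ih]

theorem psqFun_coord_mul (hv : ContDiff ℝ ∞ v) (j : Fin d) (x : Fin d → ℝ) :
    PsqFun d (fun y => y j * v y) x = x j * PsqFun d v x - 2 * pd d j v x := by
  have hdiff : ∀ {f : (Fin d → ℝ) → ℝ}, ContDiff ℝ ∞ f → Differentiable ℝ f :=
    fun hf => hf.differentiable (by simp)
  have hcoord : ContDiff ℝ ∞ fun y : Fin d → ℝ => y j := contDiff_apply ℝ ℝ j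
  simp only [PsqFun, pd_mul (hdiff hcoord) (hdiff hv), pd_coord,
    pd_add (hdiff (contDiff_const.mul hv)) (hdiff (hcoord.mul (hv.pd _))),
    pd_const_mul (hdiff hv), pd_mul (hdiff hcoord) (hdiff (hv.pd _))]
  simp only [Pi.single_apply, ite_mul, one_mul, zero_mul, Finset.sum_add_distrib,
    Finset.sum_ite_eq, Finset.mem_univ, if_true, ← Finset.mul_sum]
  ring

theorem psqFun_pd (hv : ContDiff ℝ ∞ v) (j : Fin d) (x : Fin d → ℝ) :
    PsqFun d (pd d j v) x = pd d j (PsqFun d v) x - 2 * x j * v x := by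
  have hdiff : ∀ {f : (Fin d → ℝ) → ℝ}, ContDiff ℝ ∞ f → Differentiable ℝ f :=
    fun hf => hf.differentiable (by simp)
  have hlap : ContDiff ℝ ∞ fun y => ∑ i, pd d i (pd d i v) y :=
    ContDiff.sum fun i _ => (hv.pd i).pd i
  unfold PsqFun
  simp only [pd_add (hdiff hlap.neg) (hdiff (contDiff_sumSq.mul hv)), pd_neg,
    pd_sum fun i _ => hdiff ((hv.pd i).pd i), pd_mul (hdiff contDiff_sumSq) (hdiff hv),
    pd_sumSq, pd_comm (hv.pd _) j, pd_comm hv j]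
  ring

theorem psqFun_applyLetter (hv : ContDiff ℝ ∞ v) (l : Fin d ⊕ Fin d) (x : Fin d → ℝ) :
    PsqFun d (applyLetter l v) x = applyLetter l (PsqFun d v) x - 2 * applyLetter l.swap v x := by
  cases l with
  | inl j => exact psqFun_coord_mul hv j x
  | inr j => simp only [applyLetter, Sum.swap_inr, psqFun_pd hv j x]; ring

def psqCommutator : List (Fin d ⊕ Fin d) → List (ℝ × List (Fin d ⊕ Fin d))
  | [] => []
  | l :: w => (psqCommutator w).map (fun q => (q.1, l :: q.2)) ++ [(-2, l.swap :: w)]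

theorem length_of_mem_psqCommutator :
    ∀ {w : List (Fin d ⊕ Fin d)}, ∀ q ∈ psqCommutator w, q.2.length = w.length
  | [] => by simp [psqCommutator]
  | l :: w => by
    simp only [psqCommutator, List.mem_append, List.mem_map, List.mem_singleton]
    rintro q (⟨q', hq', rfl⟩ | rfl)
    · simp [length_of_mem_psqCommutator q' hq']
    · simp

theorem psqFun_applyWord (hv : ContDiff ℝ ∞ v) (w : List (Fin d ⊕ Fin d)) :
    PsqFun d (applyWord w v) = fun x =>
      applyWord w (PsqFun d v) x + weightedSum (psqCommutator w) fun w' => applyWord w' v x := by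
  induction w with
  | nil => ext x; simp [applyWord, psqCommutator]
  | cons l w ih =>
    ext x
    have hwords : ∀ w' : List (Fin d ⊕ Fin d), ContDiff ℝ ∞ (applyWord w' v) := hv.applyWord
    rw [applyWord_cons, psqFun_applyLetter (hwords w), ih,
      applyLetter_add ((hv.psqFun.applyWord w).differentiable (by simp))
        ((ContDiff.weightedSum hwords _).differentiable (by simp)),
      applyLetter_weightedSum hwords]
    simp only [psqCommutator, weightedSum_append, weightedSum_map_snd, weightedSum_cons,
      weightedSum_nil, applyWord_cons]
    ring

end Words

section NormalForm

variable {u : (Fin d → ℝ) → ℝ}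

noncomputable def monomialTerm (k : (Fin d → ℕ) × (Fin d → ℕ)) (u : (Fin d → ℝ) → ℝ) :
    (Fin d → ℝ) → ℝ :=
  fun x => (∏ j, x j ^ k.1 j) * pdM d k.2 u x

theorem ContDiff.monomialTerm (hu : ContDiff ℝ ∞ u) (k : (Fin d → ℕ) × (Fin d → ℕ)) :
    ContDiff ℝ ∞ (_root_.monomialTerm k u) :=
  (contDiff_prod fun j _ => (contDiff_apply ℝ ℝ j).pow _).mul (hu.pdM _)

/-- `X_i x^β ∂^γ = x^(β + e_i) ∂^γ` and `D_i x^β ∂^γ = β_i x^(β - e_i) ∂^γ + x^β ∂^(γ + e_i)`; the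
truncated subtraction in `β - e_i` is harmless since the term has coefficient `β_i = 0` when it
truncates. -/
def letterNF :
    Fin d ⊕ Fin d → (Fin d → ℕ) × (Fin d → ℕ) → List (ℝ × ((Fin d → ℕ) × (Fin d → ℕ)))
  | .inl i, (β, γ) => [(1, (β + Pi.single i 1, γ))]
  | .inr i, (β, γ) => [(β i, (β - Pi.single i 1, γ)), (1, (β, γ + Pi.single i 1))]

theorem applyLetter_monomialTerm (hu : ContDiff ℝ ∞ u) (l : Fin d ⊕ Fin d)
    (k : (Fin d → ℕ) × (Fin d → ℕ)) :
    applyLetter l (monomialTerm k u)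
      = fun x => weightedSum (letterNF l k) fun k' => monomialTerm k' u x := by
  obtain ⟨β, γ⟩ := k
  ext x
  unfold monomialTerm
  cases l with
  | inl i =>
    simp only [applyLetter, letterNF, weightedSum_cons, weightedSum_nil, prod_pow_add_single]
    ring
  | inr i =>
    have hmono : ContDiff ℝ ∞ fun y : Fin d → ℝ => ∏ j, y j ^ β j :=
      contDiff_prod fun j _ => (contDiff_apply ℝ ℝ j).pow _
    simp only [applyLetter, letterNF, weightedSum_cons, weightedSum_nil,
      pd_mul (hmono.differentiable (by simp)) ((hu.pdM γ).differentiable (by simp)),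
      pd_monomial, pd_pdM hu]
    ring

def normalForm : List (Fin d ⊕ Fin d) → List (ℝ × ((Fin d → ℕ) × (Fin d → ℕ)))
  | [] => [(1, (0, 0))]
  | l :: w => bindComb (normalForm w) (letterNF l)

theorem applyWord_eq_normalForm (hu : ContDiff ℝ ∞ u) (w : List (Fin d ⊕ Fin d)) :
    applyWord w u = fun x => weightedSum (normalForm w) fun k => monomialTerm k u x := by
  induction w with
  | nil => ext x; simp [applyWord, normalForm, monomialTerm, pdM_zero]
  | cons l w ih =>
    rw [applyWord_cons, ih, applyLetter_weightedSum hu.monomialTerm, normalForm]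
    simp_rw [applyLetter_monomialTerm hu, weightedSum_bindComb]

theorem degree_le_of_mem_letterNF {l : Fin d ⊕ Fin d} {k : (Fin d → ℕ) × (Fin d → ℕ)} :
    ∀ q ∈ letterNF l k, ∑ j, q.2.1 j + ∑ j, q.2.2 j ≤ ∑ j, k.1 j + ∑ j, k.2 j + 1 := by
  obtain ⟨β, γ⟩ := k
  cases l with
  | inl i =>
    simp only [letterNF, List.mem_singleton]
    rintro _ rfl
    simp only [sum_add_single]
    omega
  | inr i =>
    simp only [letterNF, List.mem_cons, List.not_mem_nil, or_false]
    rintro _ (rfl | rfl)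
    · have := sum_sub_single_le β i
      dsimp only
      omega
    · simp only [sum_add_single]
      omega

theorem degree_le_of_mem_normalForm :
    ∀ {w : List (Fin d ⊕ Fin d)}, ∀ q ∈ normalForm w, ∑ j, q.2.1 j + ∑ j, q.2.2 j ≤ w.length
  | [] => by simp [normalForm]
  | l :: w => by
    simp only [normalForm, bindComb, List.mem_flatMap, List.mem_map]
    rintro _ ⟨p, hp, q, hq, rfl⟩
    have := degree_le_of_mem_letterNF q hq
    have := degree_le_of_mem_normalForm p hp
    simp only [List.length_cons]
    omega

end NormalForm

section Expansion

variable {a u : (Fin d → ℝ) → ℝ}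

/-- The terms of `P²((∂^α a) (W u)) - (∂^α a) W (P² u)
= (∂^α a) [P², W] u - Σ_i (∂^(α + 2e_i) a) (W u) - 2 Σ_i (∂^(α + e_i) a) (D_i W u)`. -/
def commutatorStep (k : (Fin d → ℕ) × List (Fin d ⊕ Fin d)) :
    List (ℝ × ((Fin d → ℕ) × List (Fin d ⊕ Fin d))) :=
  (psqCommutator k.2).map (fun q => (q.1, (k.1, q.2)))
    ++ (List.finRange d).map (fun i => (-1, (k.1 + Pi.single i 1 + Pi.single i 1, k.2)))
    ++ (List.finRange d).map (fun i => (-2, (k.1 + Pi.single i 1, .inr i :: k.2)))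

theorem psqFun_pdM_mul_applyWord_sub (ha : ContDiff ℝ ∞ a) (hu : ContDiff ℝ ∞ u)
    (k : (Fin d → ℕ) × List (Fin d ⊕ Fin d)) (x : Fin d → ℝ) :
    PsqFun d (fun y => pdM d k.1 a y * applyWord k.2 u y) x
        - pdM d k.1 a x * applyWord k.2 (PsqFun d u) x
      = weightedSum (commutatorStep k) fun k' => pdM d k'.1 a x * applyWord k'.2 u x := by
  rw [psqFun_mul (ha.pdM _) (hu.applyWord _), psqFun_applyWord hu]
  simp only [commutatorStep, weightedSum_append, weightedSum_map_snd, weightedSum_finRange,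
    pd_pdM ha, applyWord_cons, applyLetter, ← mul_weightedSum, Finset.sum_mul]
  ring

theorem degree_le_of_mem_commutatorStep {k : (Fin d → ℕ) × List (Fin d ⊕ Fin d)} :
    ∀ q ∈ commutatorStep k, q.2.2.length ≤ k.2.length + 1 ∧
      ∑ j, q.2.1 j + q.2.2.length ≤ ∑ j, k.1 j + k.2.length + 2 := by
  simp only [commutatorStep, List.mem_append, List.mem_map, List.mem_finRange, true_and]
  rintro _ ((⟨q, hq, rfl⟩ | ⟨i, rfl⟩) | ⟨i, rfl⟩)
  · have := length_of_mem_psqCommutator q hq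
    dsimp only
    omega
  · simp only [sum_add_single]
    omega
  · simp only [sum_add_single, List.length_cons]
    omega

def commutatorComb (d : ℕ) : ℕ → List (ℝ × ((Fin d → ℕ) × List (Fin d ⊕ Fin d)))
  | 0 => [(1, (0, []))]
  | N + 1 => bindComb (commutatorComb d N) commutatorStep

theorem degree_le_of_mem_commutatorComb :
    ∀ {N : ℕ}, ∀ p ∈ commutatorComb d N,
      p.2.2.length ≤ N ∧ ∑ j, p.2.1 j + p.2.2.length ≤ 2 * N
  | 0 => by simp [commutatorComb]
  | N + 1 => by
    simp only [commutatorComb, bindComb, List.mem_flatMap, List.mem_map]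
    rintro _ ⟨p, hp, q, hq, rfl⟩
    have := degree_le_of_mem_commutatorStep q hq
    have := degree_le_of_mem_commutatorComb p hp
    dsimp only
    omega

theorem aseqFun_eq_commutatorComb (ha : ContDiff ℝ ∞ a) (N : ℕ) :
    ∀ {u : (Fin d → ℝ) → ℝ}, ContDiff ℝ ∞ u → ∀ x, AseqFun d a N u x =
      weightedSum (commutatorComb d N) fun k => pdM d k.1 a x * applyWord k.2 u x := by
  induction N with
  | zero => intro u _ x; simp [AseqFun, commutatorComb, pdM_zero, applyWord]
  | succ N ih =>
    intro u hu x
    have hterms : ∀ k : (Fin d → ℕ) × List (Fin d ⊕ Fin d),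
        ContDiff ℝ ∞ fun y => pdM d k.1 a y * applyWord k.2 u y :=
      fun k => (ha.pdM _).mul (hu.applyWord _)
    show PsqFun d (AseqFun d a N u) x - AseqFun d a N (PsqFun d u) x = _
    rw [funext (ih hu), psqFun_weightedSum hterms, ih hu.psqFun, weightedSum_sub,
      commutatorComb, weightedSum_bindComb]
    simp only [psqFun_pdM_mul_applyWord_sub ha hu]

def expansionComb (d N : ℕ) : List (ℝ × ((Fin d → ℕ) × (Fin d → ℕ) × (Fin d → ℕ))) :=
  bindComb (commutatorComb d N) fun k => (normalForm k.2).map fun q => (q.1, (k.1, q.2))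

theorem aseqFun_eq_expansionComb (ha : ContDiff ℝ ∞ a) (hu : ContDiff ℝ ∞ u) (N : ℕ)
    (x : Fin d → ℝ) :
    AseqFun d a N u x = weightedSum (expansionComb d N) fun k =>
      pdM d k.1 a x * ((∏ j, x j ^ k.2.1 j) * pdM d k.2.2 u x) := by
  rw [aseqFun_eq_commutatorComb ha N hu, expansionComb, weightedSum_bindComb]
  simp only [weightedSum_map_snd, applyWord_eq_normalForm hu, mul_weightedSum]
  rfl

theorem degree_le_of_mem_expansionComb {N : ℕ} :
    ∀ p ∈ expansionComb d N, ∑ j, p.2.2.1 j + ∑ j, p.2.2.2 j ≤ N ∧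
      ∑ j, p.2.1 j + ∑ j, p.2.2.1 j + ∑ j, p.2.2.2 j ≤ 2 * N := by
  simp only [expansionComb, bindComb, List.mem_flatMap, List.mem_map]
  rintro _ ⟨p, hp, _, ⟨q, hq, rfl⟩, rfl⟩
  have := degree_le_of_mem_commutatorComb p hp
  have := degree_le_of_mem_normalForm q hq
  dsimp only
  omega

theorem exists_fin_eq_of_sum_le {β : Fin d → ℕ} {n : ℕ} (h : ∑ i, β i ≤ n) :
    ∃ t : Fin d → Fin (n + 1), (fun i => (t i : ℕ)) = β :=
  ⟨fun i => ⟨β i, Nat.lt_succ_of_le ((Finset.single_le_sum (fun _ _ => Nat.zero_le _)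
    (Finset.mem_univ i)).trans h)⟩, rfl⟩

end Expansion

end HarmonicOscillator

theorem commutator_expansion_general (d : ℕ) (N : ℕ) :
    ∃ C : (Fin d → ℕ) → (Fin d → ℕ) → (Fin d → ℕ) → ℝ,
      ∀ a : (Fin d → ℝ) → ℝ, Function.HasTemperateGrowth a →
        ∀ u : SchwartzMap (Fin d → ℝ) ℝ, ∀ x : Fin d → ℝ,
          AseqFun d a N (⇑u) x =
            ∑ t : (Fin d → Fin (2 * N + 1)) × (Fin d → Fin (2 * N + 1)) ×
                (Fin d → Fin (2 * N + 1)),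
              if (∑ i, (t.2.1 i : ℕ)) + (∑ i, (t.2.2 i : ℕ)) ≤ N ∧
                  (∑ i, (t.1 i : ℕ)) + (∑ i, (t.2.1 i : ℕ)) + (∑ i, (t.2.2 i : ℕ)) ≤ 2 * N
              then
                C (fun i => (t.1 i : ℕ)) (fun i => (t.2.1 i : ℕ)) (fun i => (t.2.2 i : ℕ)) *
                  pdM d (fun i => (t.1 i : ℕ)) a x * (∏ i, x i ^ (t.2.1 i : ℕ)) *
                  pdM d (fun i => (t.2.2 i : ℕ)) (⇑u) x
              else 0 := by
  let toNat : (Fin d → Fin (2 * N + 1)) ↪ (Fin d → ℕ) := Fin.valEmbedding.arrowCongrRight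
  let keys := (Finset.univ.filter fun t : (Fin d → Fin (2 * N + 1)) × (Fin d → Fin (2 * N + 1)) ×
      (Fin d → Fin (2 * N + 1)) => (∑ i, (t.2.1 i : ℕ)) + (∑ i, (t.2.2 i : ℕ)) ≤ N ∧
        (∑ i, (t.1 i : ℕ)) + (∑ i, (t.2.1 i : ℕ)) + (∑ i, (t.2.2 i : ℕ)) ≤ 2 * N).map
    (toNat.prodMap (toNat.prodMap toNat))
  have hkeys : ∀ p ∈ expansionComb d N, p.2 ∈ keys := by
    rintro ⟨c, α, β, γ⟩ hp
    obtain ⟨hβγ, hαβγ⟩ := degree_le_of_mem_expansionComb _ hp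
    dsimp only at hβγ hαβγ
    obtain ⟨tα, rfl⟩ := exists_fin_eq_of_sum_le (n := 2 * N) (by omega : ∑ i, α i ≤ 2 * N)
    obtain ⟨tβ, rfl⟩ := exists_fin_eq_of_sum_le (n := 2 * N) (by omega : ∑ i, β i ≤ 2 * N)
    obtain ⟨tγ, rfl⟩ := exists_fin_eq_of_sum_le (n := 2 * N) (by omega : ∑ i, γ i ≤ 2 * N)
    exact Finset.mem_map.2 ⟨(tα, tβ, tγ), Finset.mem_filter.2 ⟨Finset.mem_univ _, hβγ, hαβγ⟩, rfl⟩
  refine ⟨fun α β γ => combCoeff (expansionComb d N) (α, β, γ), fun a ha u x => ?_⟩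
  rw [aseqFun_eq_expansionComb ha.1 (u.smooth ⊤), weightedSum_eq_sum_combCoeff hkeys,
    Finset.sum_map, Finset.sum_filter]
  refine Finset.sum_congr rfl fun t _ => ?_
  split_ifs
  · simp only [mul_assoc]
    rfl
  · rfl

/-- The `N`-th iterated commutator of the harmonic oscillator with multiplication by
`a` is a combination `Σ C_{αβγ} (∂^α a) x^β ∂^γ` over `|β|+|γ| ≤ N`,
`|α|+|β|+|γ| ≤ 2N`, with universal constants `C_{αβγ}`. -/
theorem commutator_expansion (d : ℕ) (hd : 1 ≤ d) (N : ℕ) :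
    ∃ C : (Fin d → ℕ) → (Fin d → ℕ) → (Fin d → ℕ) → ℝ,
      ∀ a : (Fin d → ℝ) → ℝ, Function.HasTemperateGrowth a →
        ∀ u : SchwartzMap (Fin d → ℝ) ℝ, ∀ x : Fin d → ℝ,
          AseqFun d a N (⇑u) x =
            ∑ t : (Fin d → Fin (2 * N + 1)) × (Fin d → Fin (2 * N + 1)) ×
                (Fin d → Fin (2 * N + 1)),
              if (∑ i, (t.2.1 i : ℕ)) + (∑ i, (t.2.2 i : ℕ)) ≤ N ∧
                  (∑ i, (t.1 i : ℕ)) + (∑ i, (t.2.1 i : ℕ)) + (∑ i, (t.2.2 i : ℕ)) ≤ 2 * N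
              then
                C (fun i => (t.1 i : ℕ)) (fun i => (t.2.1 i : ℕ)) (fun i => (t.2.2 i : ℕ)) *
                  pdM d (fun i => (t.1 i : ℕ)) a x * (∏ i, x i ^ (t.2.1 i : ℕ)) *
                  pdM d (fun i => (t.2.2 i : ℕ)) (⇑u) x
              else 0 :=
  commutator_expansion_general d N
end

section
/- For every real N > 2 there exists a constant C > 0, independent of q and A, such that for every q ∈ ℕ and every real A ≥ 1 one has Σ_{n=0}^{∞} (|√n − √q| + A)^{−N} ≤ C (1+√q) / A^{N−2}. -/
/-!
Write `r = √n`, `c = √q` and `B = 1 + 2c`. From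
`|n - q| = |r - c| (r + c) ≤ |r - c| (|r - c| + 2c)` one gets
`|n - q| + A²B ≤ 2B (|r - c| + A)²`, so every term is at most
`(2B)^(N/2) (|n - q| + A²B)^(-N/2)`. Passing to the square costs half the exponent, and this
is where `N > 2` enters: for `N/2 > 1`, comparison with `∫ x^(-N/2)` gives
`Σ_{m ∈ ℤ} (|m| + u)^(-N/2) ≲ u^(1 - N/2)`, and at `u = A²B` the result is
`(2B)^(N/2) (A²B)^(1 - N/2) = 2^(N/2) B / A^(N-2)`.
-/

open Real Finset

section

variable {s u : ℝ}

theorem sum_range_add_rpow_neg_le (hs : 1 < s) (hu : 0 < u) (K : ℕ) :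
    ∑ i ∈ range K, ((i : ℝ) + u) ^ (-s) ≤ u ^ (-s) + u ^ (1 - s) / (s - 1) := by
  rcases K with _ | K
  · simp only [range_zero, sum_empty]; positivity
  have h0 : (0 : ℝ) ∉ Set.uIcc u (u + K) := by
    rw [Set.uIcc_of_le (by simp)]; exact fun h => hu.not_ge h.1
  have htail : ∑ i ∈ range K, (u + ↑(i + 1)) ^ (-s) ≤ u ^ (1 - s) / (s - 1) :=
    calc ∑ i ∈ range K, (u + ↑(i + 1)) ^ (-s)
        ≤ ∫ x in u..u + K, x ^ (-s) :=
          AntitoneOn.sum_le_integral (f := fun x => x ^ (-s)) fun x hx y _ hxy =>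
            rpow_le_rpow_of_nonpos (hu.trans_le hx.1) hxy (by linarith)
      _ = (u ^ (1 - s) - (u + K) ^ (1 - s)) / (s - 1) := by
          rw [integral_rpow (.inr ⟨by linarith, h0⟩), ← neg_div_neg_eq]
          ring_nf
      _ ≤ u ^ (1 - s) / (s - 1) := by
          gcongr
          exact sub_le_self _ (by positivity)
  rw [sum_range_succ', Nat.cast_zero, zero_add, add_comm]
  gcongr
  exact (sum_congr rfl fun i _ => by rw [add_comm]).trans_le htail

theorem summable_nat_add_rpow_neg (hs : 1 < s) (hu : 0 < u) :
    Summable fun n : ℕ => ((n : ℝ) + u) ^ (-s) :=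
  summable_of_sum_range_le (fun _ => by positivity) (sum_range_add_rpow_neg_le hs hu)

theorem tsum_nat_add_rpow_neg_le (hs : 1 < s) (hu : 0 < u) :
    ∑' n : ℕ, ((n : ℝ) + u) ^ (-s) ≤ u ^ (-s) + u ^ (1 - s) / (s - 1) :=
  Real.tsum_le_of_sum_range_le (fun _ => by positivity) (sum_range_add_rpow_neg_le hs hu)

theorem rpow_neg_abs_intCast_neg_add_one_le (hs : 0 ≤ s) (hu : 0 < u) (n : ℕ) :
    (|((-(n + 1) : ℤ) : ℝ)| + u) ^ (-s) ≤ ((n : ℝ) + u) ^ (-s) := by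
  push_cast
  rw [abs_neg, abs_of_pos (by positivity)]
  exact rpow_le_rpow_of_nonpos (by positivity) (by linarith) (by linarith)

theorem summable_int_abs_add_rpow_neg (hs : 1 < s) (hu : 0 < u) :
    Summable fun m : ℤ => (|(m : ℝ)| + u) ^ (-s) := by
  have hnat := summable_nat_add_rpow_neg hs hu
  refine .of_nat_of_neg_add_one (by simpa using hnat) ?_
  exact hnat.of_nonneg_of_le (fun _ => by positivity)
    (rpow_neg_abs_intCast_neg_add_one_le (by linarith) hu)

theorem tsum_int_abs_add_rpow_neg_le (hs : 1 < s) (hu : 1 ≤ u) :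
    ∑' m : ℤ, (|(m : ℝ)| + u) ^ (-s) ≤ 2 * (s / (s - 1)) * u ^ (1 - s) := by
  have hu0 : 0 < u := by linarith
  have hnat := summable_nat_add_rpow_neg hs hu0
  have hneg := rpow_neg_abs_intCast_neg_add_one_le (s := s) (by linarith) hu0
  have hnegS := hnat.of_nonneg_of_le (fun _ => by positivity) hneg
  have hcast : ∀ n : ℕ, |((n : ℤ) : ℝ)| = n := fun n => by simp
  rw [tsum_of_nat_of_neg_add_one (f := fun m : ℤ => (|(m : ℝ)| + u) ^ (-s))
    (by simpa [hcast] using hnat) hnegS]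
  simp only [hcast]
  calc _ ≤ 2 * ∑' n : ℕ, ((n : ℝ) + u) ^ (-s) := by linarith [hnegS.tsum_le_tsum hneg hnat]
    _ ≤ 2 * (u ^ (1 - s) + u ^ (1 - s) / (s - 1)) := by
        grw [tsum_nat_add_rpow_neg_le hs hu0,
          rpow_le_rpow_of_exponent_le hu (by linarith : -s ≤ 1 - s)]
    _ = 2 * (s / (s - 1)) * u ^ (1 - s) := by
        field_simp [(by linarith : s - 1 ≠ 0)]; ring

end

theorem abs_sub_add_sq_mul_le_mul_sq {x y A : ℝ} (hx : 0 ≤ x) (hy : 0 ≤ y) (hA : 1 ≤ A) :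
    |x - y| + A ^ 2 * (1 + 2 * √y) ≤ 2 * (1 + 2 * √y) * (|√x - √y| + A) ^ 2 := by
  set d := |√x - √y|
  have hd : 0 ≤ d := abs_nonneg _
  have hxy : |x - y| = d * (√x + √y) := by
    rw [← abs_of_nonneg (by positivity : 0 ≤ √x + √y), ← abs_mul]
    congr 1
    nlinarith [sq_sqrt hx, sq_sqrt hy]
  have hsx : √x ≤ d + √y := by linarith [le_abs_self (√x - √y)]
  have hsy := sqrt_nonneg y
  rw [hxy]
  nlinarith [mul_le_mul_of_nonneg_left hsx hd, mul_nonneg hsy hd,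
    mul_nonneg hsy (by linarith : 0 ≤ d + A - 1)]

theorem rpow_neg_abs_sqrt_sub_sqrt_add_le {x y A N : ℝ} (hx : 0 ≤ x) (hy : 0 ≤ y)
    (hA : 1 ≤ A) (hN : 0 ≤ N) :
    (|√x - √y| + A) ^ (-N) ≤
      (2 * (1 + 2 * √y)) ^ (N / 2) * (|x - y| + A ^ 2 * (1 + 2 * √y)) ^ (-(N / 2)) := by
  set B := 1 + 2 * √y
  have hB : 0 < B := by positivity
  calc (|√x - √y| + A) ^ (-N)
      = ((|√x - √y| + A) ^ 2) ^ (-(N / 2)) := by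
        rw [← rpow_natCast, ← rpow_mul (by positivity)]; ring_nf
    _ ≤ ((|x - y| + A ^ 2 * B) / (2 * B)) ^ (-(N / 2)) := by
        refine rpow_le_rpow_of_nonpos (by positivity) ?_ (by linarith)
        rw [div_le_iff₀ (by positivity)]
        linarith [abs_sub_add_sq_mul_le_mul_sq hx hy hA]
    _ = (2 * B) ^ (N / 2) * (|x - y| + A ^ 2 * B) ^ (-(N / 2)) := by
        rw [div_rpow (by positivity) (by positivity), rpow_neg (by positivity),
          rpow_neg (by positivity), div_inv_eq_mul, mul_comm]

theorem two_mul_rpow_mul_sq_mul_rpow {A B N : ℝ} (hA : 0 < A) (hB : 0 < B) :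
    (2 * B) ^ (N / 2) * (A ^ 2 * B) ^ (1 - N / 2) = 2 ^ (N / 2) * B / A ^ (N - 2) := by
  have hBB : B ^ (N / 2) * B ^ (1 - N / 2) = B := by
    rw [← rpow_add hB]; norm_num
  have hA2 : (A ^ 2) ^ (1 - N / 2) = (A ^ (N - 2))⁻¹ := by
    rw [← rpow_natCast, ← rpow_mul hA.le, ← rpow_neg hA.le]; push_cast; ring_nf
  rw [mul_rpow (by norm_num) hB.le, mul_rpow (by positivity) hB.le, hA2]
  linear_combination 2 ^ (N / 2) * (A ^ (N - 2))⁻¹ * hBB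

/-- For `N > 2` there is `C > 0`, independent of `q ∈ ℕ` and `A ≥ 1`, such that
`Σ_n (|√n − √q| + A)^{−N} ≤ C (1+√q) / A^{N−2}`. -/
theorem sum_inv_sqrt_shift_bound (N : ℝ) (hN : 2 < N) :
    ∃ C : ℝ, 0 < C ∧
      ∀ (q : ℕ) (A : ℝ), 1 ≤ A →
        Summable (fun n : ℕ => (|Real.sqrt n - Real.sqrt q| + A) ^ (-N : ℝ)) ∧
        ∑' n : ℕ, (|Real.sqrt n - Real.sqrt q| + A) ^ (-N : ℝ) ≤
          C * (1 + Real.sqrt q) / A ^ (N - 2 : ℝ) := by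
  have hs : 1 < N / 2 := by linarith
  refine ⟨4 * 2 ^ (N / 2) * (N / 2 / (N / 2 - 1)), by positivity, fun q A hA => ?_⟩
  set B := 1 + 2 * √q
  have hB : 0 < B := by positivity
  have hu : 1 ≤ A ^ 2 * B := one_le_mul_of_one_le_of_one_le (one_le_pow₀ hA) (by simp [B])
  set g : ℤ → ℝ := fun m => (2 * B) ^ (N / 2) * (|(m : ℝ)| + A ^ 2 * B) ^ (-(N / 2))
  have hg : Summable g := (summable_int_abs_add_rpow_neg hs (by linarith)).mul_left _
  have hshift : Function.Injective fun n : ℕ => (n : ℤ) - q := fun a b h => by simpa using h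
  have hgq : Summable fun n : ℕ => g (n - q) := hg.comp_injective hshift
  have hle : ∀ n : ℕ, (|√n - √q| + A) ^ (-N) ≤ g (n - q) := fun n => by
    simpa [g] using rpow_neg_abs_sqrt_sub_sqrt_add_le n.cast_nonneg q.cast_nonneg hA (by linarith)
  have hf := hgq.of_nonneg_of_le (fun _ => by positivity) hle
  refine ⟨hf, ?_⟩
  calc ∑' n : ℕ, (|√n - √q| + A) ^ (-N)
      ≤ ∑' m, g m := (hf.tsum_le_tsum hle hgq).trans
        (tsum_comp_le_tsum_of_inj hg (fun _ => by positivity) hshift)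
    _ ≤ (2 * B) ^ (N / 2) * (2 * (N / 2 / (N / 2 - 1)) * (A ^ 2 * B) ^ (1 - N / 2)) := by
        rw [tsum_mul_left]; gcongr; exact tsum_int_abs_add_rpow_neg_le hs hu
    _ = 2 * (N / 2 / (N / 2 - 1)) * 2 ^ (N / 2) * B / A ^ (N - 2) := by
        rw [mul_left_comm, two_mul_rpow_mul_sq_mul_rpow (by linarith) hB]; ring
    _ ≤ 4 * 2 ^ (N / 2) * (N / 2 / (N / 2 - 1)) * (1 + √q) / A ^ (N - 2) := by
        rw [show 4 * 2 ^ (N / 2) * (N / 2 / (N / 2 - 1)) * (1 + √q) =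
          2 * (N / 2 / (N / 2 - 1)) * 2 ^ (N / 2) * (2 * (1 + √q)) by ring]
        gcongr
        linarith [sqrt_nonneg (q : ℝ)]
end
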